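/- Let m ≥ 2 and D, E, F ⊆ [m] with |D| = |E| = |F| = n where 0 ≤ n ≤ m−2. Then the Gray image Φ(C_L) is a minimal binary linear code: for all nonzero codewords x, y ∈ Φ(C_L) with supp(y) ⊆ supp(x), one has y = x. -/
import Mathlib


open Finset

/-- The ring Z_2[u] with u² = 0: dual numbers over Z_2. -/
abbrev R2 : Type := DualNumber (ZMod 2)

/-- The support of a vector in Z_2^m, as a finset of coordinates. -/
def suppF {m : ℕ} (w : Fin m → ZMod 2) : Finset (Fin m) :=
  Finset.univ.filter fun i => w i ≠ 0

/-- Inner product ⟨x,y⟩ = Σ_i x_i y_i in Z_2. -/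
def ip {m : ℕ} (x y : Fin m → ZMod 2) : ZMod 2 := ∑ i, x i * y i

/-- The defining set L = Δ_D^c × Δ_E^c × Δ_F^c, parametrized by triples (t₁,t₂,t₃). -/
def Lset (m : ℕ) (D E F : Finset (Fin m)) :
    Finset ((Fin m → ZMod 2) × (Fin m → ZMod 2) × (Fin m → ZMod 2)) :=
  Finset.univ.filter fun t => ¬ suppF t.1 ⊆ D ∧ ¬ suppF t.2.1 ⊆ E ∧ ¬ suppF t.2.2 ⊆ F

/-- The codeword c_a = (a·l)_{l∈L} for a = (p, q+ur), where
a·l = ⟨q,t₂⟩ + u(⟨p,t₁⟩ + ⟨q,t₃⟩ + ⟨r,t₂⟩). -/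
def cword {m : ℕ} (D E F : Finset (Fin m)) (p q r : Fin m → ZMod 2) :
    ↥(Lset m D E F) → R2 := fun l =>
  TrivSqZeroExt.inl (ip q l.val.2.1) +
    TrivSqZeroExt.inr (ip p l.val.1 + ip q l.val.2.2 + ip r l.val.2.1)

/-- Lee weight of a single element q + ur of Z_2[u]: wt_H(r) + wt_H(q+r). -/
def leeWtOne (x : R2) : ℕ :=
  (if TrivSqZeroExt.snd x ≠ 0 then 1 else 0) +
    (if TrivSqZeroExt.fst x + TrivSqZeroExt.snd x ≠ 0 then 1 else 0)

/-- Lee weight of a vector over Z_2[u]: sum of coordinate Lee weights. -/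
def leeWt {ι : Type} [Fintype ι] (c : ι → R2) : ℕ := ∑ i, leeWtOne (c i)

/-- The Gray map: coordinatewise q + ur ↦ (r, q + r). -/
def gray {ι : Type} (c : ι → R2) : ι ⊕ ι → ZMod 2 :=
  Sum.elim (fun i => TrivSqZeroExt.snd (c i))
    (fun i => TrivSqZeroExt.fst (c i) + TrivSqZeroExt.snd (c i))

/-- The code C_L as a set of words over Z_2[u] indexed by L. -/
def CL (m : ℕ) (D E F : Finset (Fin m)) : Set (↥(Lset m D E F) → R2) :=
  { c | ∃ p q r : Fin m → ZMod 2, c = cword D E F p q r }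

namespace S16

/-! Auxiliary machinery: character sums over the defining set. -/

def sgn (x : ZMod 2) : ℤ := if x = 0 then 1 else -1

lemma sgn_add (x y : ZMod 2) : sgn (x + y) = sgn x * sgn y := by
  revert x y; decide

lemma ip_zero_left {m : ℕ} (t : Fin m → ZMod 2) : ip 0 t = 0 := by simp [ip]

lemma ip_add_left {m : ℕ} (x y t : Fin m → ZMod 2) :
    ip (x + y) t = ip x t + ip y t := by
  simp [ip, add_mul, Finset.sum_add_distrib]

lemma ip_add_right {m : ℕ} (v t s : Fin m → ZMod 2) :
    ip v (t + s) = ip v t + ip v s := by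
  simp [ip, mul_add, Finset.sum_add_distrib]

lemma ip_single {m : ℕ} (v : Fin m → ZMod 2) (j : Fin m) :
    ip v (Pi.single j 1) = v j := by
  simp [ip, Pi.single_apply, mul_ite]

lemma single_add_single {m : ℕ} (j : Fin m) :
    (Pi.single j 1 + Pi.single j 1 : Fin m → ZMod 2) = 0 := by
  ext i
  simp only [Pi.add_apply, Pi.single_apply, Pi.zero_apply]
  split <;> decide

/-- The involution trick: if the index set is closed under adding `e_j` and `v j ≠ 0`,
the character sum vanishes. -/
lemma sum_sgn_eq_zero {m : ℕ} (s : Finset (Fin m → ZMod 2)) (v : Fin m → ZMod 2)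
    (j : Fin m) (hv : v j ≠ 0)
    (hs : ∀ t ∈ s, t + Pi.single j 1 ∈ s) :
    ∑ t ∈ s, sgn (ip v t) = 0 := by
  have hv1 : v j = 1 := by
    have h : ∀ x : ZMod 2, x ≠ 0 → x = 1 := by decide
    exact h _ hv
  have h1 : ∀ a ∈ s, sgn (ip v a) + sgn (ip v (a + Pi.single j 1)) = 0 := by
    intro a _
    rw [ip_add_right, ip_single, hv1]
    generalize ip v a = x; revert x; decide
  have h3 : ∀ (a : Fin m → ZMod 2), a ∈ s → sgn (ip v a) ≠ 0 →
      a + Pi.single j 1 ≠ a := by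
    intro a _ _ h
    have h2 := congrFun h j
    simp only [Pi.add_apply, Pi.single_eq_same] at h2
    exact one_ne_zero (add_left_cancel (a := a j) (by rw [add_zero]; exact h2))
  have h4 : ∀ (a : Fin m → ZMod 2), a + Pi.single j 1 + Pi.single j 1 = a := by
    intro a; rw [add_assoc, single_add_single, add_zero]
  exact Finset.sum_involution (fun t _ => t + Pi.single j 1) h1 h3 hs (fun a ha => h4 a)

lemma mem_suppF {m : ℕ} {w : Fin m → ZMod 2} {i : Fin m} :
    i ∈ suppF w ↔ w i ≠ 0 := by simp [suppF]

/-- Δ_S, the "small cube". -/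
def cube {m : ℕ} (S : Finset (Fin m)) : Finset (Fin m → ZMod 2) :=
  Finset.univ.filter fun t => suppF t ⊆ S

/-- Δ_S^c -/
def cubeC {m : ℕ} (S : Finset (Fin m)) : Finset (Fin m → ZMod 2) :=
  Finset.univ.filter fun t => ¬ suppF t ⊆ S

lemma card_cube {m : ℕ} (S : Finset (Fin m)) : (cube S).card = 2 ^ S.card := by
  classical
  have e : {t : Fin m → ZMod 2 // suppF t ⊆ S} ≃ (↥S → ZMod 2) :=
    { toFun := fun t i => t.1 i.1
      invFun := fun g => ⟨fun i => if h : i ∈ S then g ⟨i, h⟩ else 0, by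
        intro i hi
        rw [mem_suppF] at hi
        by_contra hns
        simp [dif_neg hns] at hi⟩
      left_inv := by
        intro t
        ext i
        by_cases h : i ∈ S
        · simp [dif_pos h]
        · simp only [dif_neg h]
          by_contra hne
          exact h (t.2 (mem_suppF.2 fun h0 => hne h0.symm))
      right_inv := by
        intro g; ext i; simp [dif_pos i.2] }
  have : (cube S).card = Fintype.card {t : Fin m → ZMod 2 // suppF t ⊆ S} := by
    rw [Fintype.card_subtype]; rfl
  rw [this, Fintype.card_congr e, Fintype.card_fun, Fintype.card_coe, ZMod.card]

/-- The character sum of ⟨v,·⟩ over Δ_S^c. -/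
def bsum {m : ℕ} (S : Finset (Fin m)) (v : Fin m → ZMod 2) : ℤ :=
  ∑ t ∈ cubeC S, sgn (ip v t)

lemma bsum_split {m : ℕ} (S : Finset (Fin m)) (v : Fin m → ZMod 2) :
    bsum S v = (∑ t : Fin m → ZMod 2, sgn (ip v t)) - ∑ t ∈ cube S, sgn (ip v t) := by
  rw [eq_sub_iff_add_eq, bsum, cube, cubeC]
  rw [Finset.sum_filter_not_add_sum_filter]

lemma bsum_zero {m : ℕ} (S : Finset (Fin m)) :
    bsum S (0 : Fin m → ZMod 2) = 2 ^ m - 2 ^ S.card := by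
  rw [bsum_split]
  have h1 : ∀ t : Fin m → ZMod 2, sgn (ip 0 t) = 1 := by
    intro t; rw [ip_zero_left]; rfl
  simp only [h1, Finset.sum_const, nsmul_eq_mul, mul_one, card_cube]
  simp [Fintype.card_fun]

lemma bsum_of_free {m : ℕ} (S : Finset (Fin m)) (v : Fin m → ZMod 2)
    (hv : v ≠ 0) (hfree : ∀ i ∈ S, v i = 0) :
    bsum S v = -(2 ^ S.card) := by
  obtain ⟨j, hj⟩ : ∃ j, v j ≠ 0 := Function.ne_iff.1 hv
  rw [bsum_split]
  rw [sum_sgn_eq_zero Finset.univ v j hj (fun t _ => Finset.mem_univ _)]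
  have h2 : ∀ t ∈ cube S, sgn (ip v t) = 1 := by
    intro t ht
    have hts : suppF t ⊆ S := (Finset.mem_filter.1 ht).2
    have : ip v t = 0 := by
      apply Finset.sum_eq_zero
      intro i _
      by_cases hvi : v i = 0
      · rw [hvi, zero_mul]
      · have hiS : i ∉ S := fun hiS => hvi (hfree i hiS)
        have : t i = 0 := by
          by_contra h0
          exact hiS (hts (mem_suppF.2 h0))
        rw [this, mul_zero]
    rw [this]; rfl
  rw [Finset.sum_congr rfl h2]
  simp [card_cube]

lemma bsum_of_heavy {m : ℕ} (S : Finset (Fin m)) (v : Fin m → ZMod 2)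
    (j : Fin m) (hjS : j ∈ S) (hvj : v j ≠ 0) :
    bsum S v = 0 := by
  apply sum_sgn_eq_zero _ v j hvj
  intro t ht
  rw [cubeC, Finset.mem_filter] at ht ⊢
  refine ⟨Finset.mem_univ _, fun hsub => ht.2 ?_⟩
  intro i hi
  rw [mem_suppF] at hi
  by_cases hij : i = j
  · exact hij ▸ hjS
  · apply hsub
    rw [mem_suppF]
    have he : (t + Pi.single j 1 : Fin m → ZMod 2) i = t i := by
      simp [Pi.single_apply, hij]
    rw [he]
    exact hi

/-- Values of bsum for nonzero v. -/
lemma bsum_ne {m : ℕ} (S : Finset (Fin m)) (v : Fin m → ZMod 2) (hv : v ≠ 0) :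
    bsum S v = -(2 ^ S.card) ∨ bsum S v = 0 := by
  classical
  by_cases h : ∃ j ∈ S, v j ≠ 0
  · obtain ⟨j, hjS, hvj⟩ := h
    exact Or.inr (bsum_of_heavy S v j hjS hvj)
  · push_neg at h
    exact Or.inl (bsum_of_free S v hv h)

lemma bsum_cases {m : ℕ} (S : Finset (Fin m)) (v : Fin m → ZMod 2) :
    bsum S v = 2 ^ m - 2 ^ S.card ∨ bsum S v = -(2 ^ S.card) ∨ bsum S v = 0 := by
  by_cases hv : v = 0
  · exact Or.inl (hv ▸ bsum_zero S)
  · exact Or.inr (bsum_ne S v hv)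

lemma Lset_prod (m : ℕ) (D E F : Finset (Fin m)) :
    Lset m D E F = cubeC D ×ˢ (cubeC E ×ˢ cubeC F) := by
  ext ⟨t1, t2, t3⟩
  simp [Lset, cubeC, Finset.mem_product, and_assoc]

lemma chi_eq {m : ℕ} (D E F : Finset (Fin m)) (p q r : Fin m → ZMod 2) :
    ∑ l ∈ Lset m D E F, sgn (ip p l.1 + ip q l.2.2 + ip r l.2.1)
      = bsum D p * (bsum E r * bsum F q) := by
  rw [Lset_prod, Finset.sum_product]
  have key : ∀ t1 t2 t3 : Fin m → ZMod 2,
      sgn (ip p t1 + ip q t3 + ip r t2)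
        = sgn (ip p t1) * (sgn (ip r t2) * sgn (ip q t3)) := by
    intro t1 t2 t3
    rw [show ip p t1 + ip q t3 + ip r t2 = ip p t1 + (ip r t2 + ip q t3) by ring,
      sgn_add, sgn_add]
  simp_rw [Finset.sum_product, key, ← Finset.mul_sum, ← Finset.sum_mul]
  rfl

set_option maxHeartbeats 1000000 in
lemma tri_le (Q K x y z : ℤ) (hQ : 0 < Q) (hQK : Q ≤ K)
    (hx : x = K ∨ x = -Q ∨ x = 0) (hy : y = K ∨ y = -Q ∨ y = 0)
    (hz : z = K ∨ z = -Q ∨ z = 0)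
    (hone : (x = -Q ∨ x = 0) ∨ (y = -Q ∨ y = 0) ∨ (z = -Q ∨ z = 0)) :
    x * (y * z) ≤ Q * (Q * K) := by
  have hK : 0 < K := lt_of_lt_of_le hQ hQK
  rcases hx with rfl | rfl | rfl <;> rcases hy with rfl | rfl | rfl <;>
    rcases hz with rfl | rfl | rfl <;>
    first
      | (rcases hone with (h | h) | (h | h) | (h | h) <;> linarith)
      | nlinarith [mul_pos (mul_pos hQ hQ) hK,
          mul_nonneg (mul_nonneg hQ.le hK.le) hK.le,
          mul_pos (mul_pos hQ hQ) hQ]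

set_option maxHeartbeats 1000000 in
lemma tri_ge (Q K x y z : ℤ) (hQ : 0 < Q) (hQK : Q ≤ K)
    (hx : x = K ∨ x = -Q ∨ x = 0) (hy : y = K ∨ y = -Q ∨ y = 0)
    (hz : z = K ∨ z = -Q ∨ z = 0) :
    -(Q * (K * K)) ≤ x * (y * z) := by
  have hK : 0 < K := lt_of_lt_of_le hQ hQK
  rcases hx with rfl | rfl | rfl <;> rcases hy with rfl | rfl | rfl <;>
    rcases hz with rfl | rfl | rfl <;>
    nlinarith [mul_pos (mul_pos hQ hQ) hK,
      mul_nonneg (mul_nonneg hQ.le hK.le) hK.le,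
      mul_pos (mul_pos hK hK) hK,
      mul_le_mul_of_nonneg_left (mul_le_mul hQK hQK hQ.le hK.le) hQ.le]

lemma contra (Q K X Y Z : ℤ) (hQ : 0 < Q) (h3 : 3 * Q ≤ K)
    (heq : X + Y - Z = K * (K * K))
    (hX : X ≤ Q * (Q * K)) (hY : Y ≤ Q * (Q * K)) (hZ : -(Q * (K * K)) ≤ Z) :
    False := by
  have hK : 0 < K := by linarith
  nlinarith [mul_le_mul_of_nonneg_right h3 (mul_nonneg hK.le hK.le),
    mul_le_mul_of_nonneg_right h3 (mul_nonneg hQ.le hK.le),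
    mul_pos (mul_pos hQ hQ) hK]

lemma snd_cword {m : ℕ} (D E F : Finset (Fin m)) (p q r : Fin m → ZMod 2)
    (l : ↥(Lset m D E F)) :
    TrivSqZeroExt.snd (cword D E F p q r l)
      = ip p l.val.1 + ip q l.val.2.2 + ip r l.val.2.1 := by
  simp [cword]

lemma psgn (x y : ZMod 2) (h : y ≠ 0 → x ≠ 0) :
    sgn y + sgn (x + y) - sgn x = 1 := by
  revert h; revert x y; decide

lemma zmod_add_eq_zero (a b : ZMod 2) (h : a + b = 0) : b = a := by
  revert h; revert a b; decide

end S16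

open S16 in
/-- for |D| = |E| = |F| = n ≤ m−2, the Gray image Φ(C_L) is a minimal
binary linear code. -/
theorem stmt16 (m n : ℕ) (hm : 2 ≤ m) (hn : n ≤ m - 2) (D E F : Finset (Fin m))
    (hD : D.card = n) (hE : E.card = n) (hF : F.card = n) :
    ∀ p q r p' q' r' : Fin m → ZMod 2,
      gray (cword D E F p q r) ≠ 0 →
      gray (cword D E F p' q' r') ≠ 0 →
      (∀ i, gray (cword D E F p' q' r') i ≠ 0 → gray (cword D E F p q r) i ≠ 0) →
      gray (cword D E F p' q' r') = gray (cword D E F p q r) := by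
  intro p q r p' q' r' h1 h2 h3
  by_cases heq : p + p' = 0 ∧ q + q' = 0 ∧ r + r' = 0
  · obtain ⟨e1, e2, e3⟩ := heq
    have hp : p' = p := funext fun i => zmod_add_eq_zero _ _ (congrFun e1 i)
    have hq : q' = q := funext fun i => zmod_add_eq_zero _ _ (congrFun e2 i)
    have hr : r' = r := funext fun i => zmod_add_eq_zero _ _ (congrFun e3 i)
    rw [hp, hq, hr]
  exfalso
  by_cases hz : p' = 0 ∧ q' = 0 ∧ r' = 0
  · obtain ⟨rfl, rfl, rfl⟩ := hz
    apply h2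
    funext i
    cases i with
    | inl a => simp [gray, cword, ip_zero_left]
    | inr a => simp [gray, cword, ip_zero_left]
  -- the counting identity
  have key : ∀ l ∈ Lset m D E F,
      sgn (ip p' l.1 + ip q' l.2.2 + ip r' l.2.1)
        + sgn (ip (p + p') l.1 + ip (q + q') l.2.2 + ip (r + r') l.2.1)
        - sgn (ip p l.1 + ip q l.2.2 + ip r l.2.1)
      = sgn (ip (0 : Fin m → ZMod 2) l.1 + ip (0 : Fin m → ZMod 2) l.2.2
          + ip (0 : Fin m → ZMod 2) l.2.1) := by
    intro l hl
    have hsum : ip (p + p') l.1 + ip (q + q') l.2.2 + ip (r + r') l.2.1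
        = (ip p l.1 + ip q l.2.2 + ip r l.2.1)
          + (ip p' l.1 + ip q' l.2.2 + ip r' l.2.1) := by
      rw [ip_add_left, ip_add_left, ip_add_left]; ring
    have hptw := h3 (Sum.inl ⟨l, hl⟩)
    simp only [gray, Sum.elim_inl, snd_cword] at hptw
    rw [hsum, ip_zero_left, ip_zero_left, ip_zero_left]
    exact psgn _ _ hptw
  have hEq := Finset.sum_congr rfl key
  rw [Finset.sum_sub_distrib, Finset.sum_add_distrib] at hEq
  rw [chi_eq, chi_eq, chi_eq, chi_eq] at hEq
  -- numerics
  set Q : ℤ := 2 ^ n with hQdef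
  set K : ℤ := 2 ^ m - 2 ^ n with hKdef
  have hQ : 0 < Q := by positivity
  have h3Q : 3 * Q ≤ K := by
    have hmn : n + 2 ≤ m := by omega
    rw [hKdef, hQdef]
    nlinarith [pow_le_pow_right₀ (show (1:ℤ) ≤ 2 by norm_num) hmn,
      pow_pos (show (0:ℤ) < 2 by norm_num) n,
      (show (2:ℤ) ^ (n + 2) = 4 * 2 ^ n by ring)]
  have hQK : Q ≤ K := by linarith
  have hb0 : ∀ (S : Finset (Fin m)), S.card = n →
      bsum S (0 : Fin m → ZMod 2) = K := by
    intro S hS; rw [bsum_zero, hS]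
  have hbc : ∀ (S : Finset (Fin m)) (v : Fin m → ZMod 2), S.card = n →
      bsum S v = K ∨ bsum S v = -Q ∨ bsum S v = 0 := by
    intro S v hS
    have := bsum_cases S v
    rw [hS] at this
    exact this
  have hbn : ∀ (S : Finset (Fin m)) (v : Fin m → ZMod 2), S.card = n → v ≠ 0 →
      bsum S v = -Q ∨ bsum S v = 0 := by
    intro S v hS hv
    have := bsum_ne S v hv
    rw [hS] at this
    exact this
  rw [hb0 D hD, hb0 E hE, hb0 F hF] at hEq
  -- at least one "small" factor in each of the two nonzero codeword terms
  have hone1 : (bsum D p' = -Q ∨ bsum D p' = 0) ∨ (bsum E r' = -Q ∨ bsum E r' = 0)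
      ∨ (bsum F q' = -Q ∨ bsum F q' = 0) := by
    by_cases hp' : p' = 0
    · by_cases hq' : q' = 0
      · have hr' : r' ≠ 0 := fun h => hz ⟨hp', hq', h⟩
        exact Or.inr (Or.inl (hbn E r' hE hr'))
      · exact Or.inr (Or.inr (hbn F q' hF hq'))
    · exact Or.inl (hbn D p' hD hp')
  have hone2 : (bsum D (p + p') = -Q ∨ bsum D (p + p') = 0)
      ∨ (bsum E (r + r') = -Q ∨ bsum E (r + r') = 0)
      ∨ (bsum F (q + q') = -Q ∨ bsum F (q + q') = 0) := by
    by_cases hp' : p + p' = 0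
    · by_cases hq' : q + q' = 0
      · have hr' : r + r' ≠ 0 := fun h => heq ⟨hp', hq', h⟩
        exact Or.inr (Or.inl (hbn E _ hE hr'))
      · exact Or.inr (Or.inr (hbn F _ hF hq'))
    · exact Or.inl (hbn D _ hD hp')
  exact contra Q K _ _ _ hQ h3Q hEq
    (tri_le Q K _ _ _ hQ hQK (hbc D p' hD) (hbc E r' hE) (hbc F q' hF) hone1)
    (tri_le Q K _ _ _ hQ hQK (hbc D _ hD) (hbc E _ hE) (hbc F _ hF) hone2)
    (tri_ge Q K _ _ _ hQ hQK (hbc D p hD) (hbc E r hE) (hbc F q hF))
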